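/- arXiv:chao-dyn/9412010 — 5 statements merged into one kernel-verified Lean document; each statement's English description precedes it below -/
import Mathlib

section
/- With ρ(x,y) = −exp(x+y)·x^{-(a+1)}·y^{-(b+1)} and Φ(x,y) = exp(x+y)·x^{-a}·y^{-b}, the predator-prey vector field satisfies ẋ = ρ^{-1}·∂Φ/∂y and ẏ = −ρ^{-1}·∂Φ/∂x on the open quadrant x>0, y>0; i.e., the system is Hamiltonian with Hamiltonian Φ for the Poisson structure Λ^{ij} = ρ^{-1}ε^{ij}. -/
open Real

noncomputable def pdX (f : ℝ × ℝ → ℝ) (p : ℝ × ℝ) : ℝ := fderiv ℝ f p (1, 0)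
noncomputable def pdY (f : ℝ × ℝ → ℝ) (p : ℝ × ℝ) : ℝ := fderiv ℝ f p (0, 1)

/-! Φ factors as `(eˣ x⁻ᵃ)(eʸ y⁻ᵇ)` and `ρ = -Φ / (x y)`, so each partial derivative of `Φ` is
the derivative of one factor, `(eᵗ t^α)' = eᵗ t^(α-1) (t + α)`, and dividing by `ρ` leaves
`-x (y - b)` and `-y (x - a)`. -/

section SeparableProduct

variable {f g : ℝ → ℝ} {f' g' x y : ℝ}

theorem hasFDerivAt_mul_fst_snd (hf : HasDerivAt f f' x) (hg : HasDerivAt g g' y) :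
    HasFDerivAt (fun p : ℝ × ℝ => f p.1 * g p.2)
      (f x • g' • ContinuousLinearMap.snd ℝ ℝ ℝ + g y • f' • ContinuousLinearMap.fst ℝ ℝ ℝ)
      (x, y) :=
  (hf.comp_hasFDerivAt (x, y) hasFDerivAt_fst).mul (hg.comp_hasFDerivAt (x, y) hasFDerivAt_snd)

theorem pdX_mul_fst_snd (hf : HasDerivAt f f' x) (hg : HasDerivAt g g' y) :
    pdX (fun p : ℝ × ℝ => f p.1 * g p.2) (x, y) = f' * g y := by
  simp [pdX, (hasFDerivAt_mul_fst_snd hf hg).fderiv, mul_comm]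

theorem pdY_mul_fst_snd (hf : HasDerivAt f f' x) (hg : HasDerivAt g g' y) :
    pdY (fun p : ℝ × ℝ => f p.1 * g p.2) (x, y) = f x * g' := by
  simp [pdY, (hasFDerivAt_mul_fst_snd hf hg).fderiv]

end SeparableProduct

theorem hasDerivAt_exp_mul_rpow (α : ℝ) {t : ℝ} (ht : 0 < t) :
    HasDerivAt (fun s => exp s * s ^ α) (exp t * t ^ (α - 1) * (t + α)) t := by
  refine ((hasDerivAt_exp t).mul (hasDerivAt_rpow_const (Or.inl ht.ne'))).congr_deriv ?_
  rw [rpow_sub_one ht.ne']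
  field_simp

theorem predator_prey_hamiltonian_general (a b : ℝ)
    (Φ ρ : ℝ × ℝ → ℝ)
    (hΦ : ∀ p : ℝ × ℝ, Φ p = Real.exp (p.1 + p.2) * p.1 ^ (-a) * p.2 ^ (-b))
    (hρ : ∀ p : ℝ × ℝ, ρ p = -(Real.exp (p.1 + p.2) * p.1 ^ (-(a + 1)) * p.2 ^ (-(b + 1)))) :
    ∀ x y : ℝ, 0 < x → 0 < y →
      x * (b - y) = (ρ (x, y))⁻¹ * pdY Φ (x, y) ∧
      y * (x - a) = -((ρ (x, y))⁻¹ * pdX Φ (x, y)) := by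
  intro x y hx hy
  have hΦ_sep : Φ = fun p : ℝ × ℝ => (exp p.1 * p.1 ^ (-a)) * (exp p.2 * p.2 ^ (-b)) := by
    funext p
    rw [hΦ, exp_add]
    ring
  have hρ_xy : ρ (x, y) = -((exp x * x ^ (-a - 1)) * (exp y * y ^ (-b - 1))) := by
    rw [hρ, exp_add, neg_add', neg_add']
    ring
  have hdx := hasDerivAt_exp_mul_rpow (-a) hx
  have hdy := hasDerivAt_exp_mul_rpow (-b) hy
  rw [hΦ_sep, pdX_mul_fst_snd hdx hdy, pdY_mul_fst_snd hdx hdy, hρ_xy,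
    rpow_sub_one hx.ne', rpow_sub_one hy.ne']
  have hxa : x ^ (-a) ≠ 0 := (rpow_pos_of_pos hx _).ne'
  have hyb : y ^ (-b) ≠ 0 := (rpow_pos_of_pos hy _).ne'
  constructor <;> field_simp <;> ring

/-- The predator-prey system is Hamiltonian with Hamiltonian Φ for the Poisson
structure Λ = ρ⁻¹ε: ẋ = ρ⁻¹∂Φ/∂y and ẏ = −ρ⁻¹∂Φ/∂x on x>0, y>0. -/
theorem predator_prey_hamiltonian (a b : ℝ) (ha : 0 ≤ a) (hb : 0 ≤ b)
    (Φ ρ : ℝ × ℝ → ℝ)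
    (hΦ : ∀ p : ℝ × ℝ, Φ p = Real.exp (p.1 + p.2) * p.1 ^ (-a) * p.2 ^ (-b))
    (hρ : ∀ p : ℝ × ℝ, ρ p = -(Real.exp (p.1 + p.2) * p.1 ^ (-(a + 1)) * p.2 ^ (-(b + 1)))) :
    ∀ x y : ℝ, 0 < x → 0 < y →
      x * (b - y) = (ρ (x, y))⁻¹ * pdY Φ (x, y) ∧
      y * (x - a) = -((ρ (x, y))⁻¹ * pdX Φ (x, y)) :=
  predator_prey_hamiltonian_general a b Φ ρ hΦ hρ
end

section
/- For κ > 2 and Δ = (κ²−4)^{1/2}, the function Φ^O(x,y) = ½(x²+y²+κxy)·|(κx+2y+Δx)/(κx+2y−Δx)|^{κ/Δ} is a first integral of the over-damped harmonic oscillator ẋ = y, ẏ = −x−κy, on the open set where (κx+2y)² ≠ Δ²x². -/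
open Real

/-!
In the eigen-coordinates `u = (κ + Δ) x + 2 y` and `w = (κ - Δ) x + 2 y` of the linear field,
the flow rescales `u` and `w` at the rates `λ₊ = (Δ - κ) / 2` and `λ₋ = -(κ + Δ) / 2`, and
`u w = 4 (x² + κ x y + y²)`, so `Φ = (u w / 8) |u / w| ^ (κ / Δ)`. Along the flow, logarithmic
derivatives add over products and quotients and scale under powers, so `Φ` has logarithmic
derivative `λ₊ + λ₋ + (κ / Δ) (λ₊ - λ₋) = -κ + κ = 0`.
-/

section LogDerivAlong

variable {E : Type*} [NormedAddCommGroup E] [NormedSpace ℝ E] {f g : E → ℝ} {v p : E} {a b : ℝ}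

/-- Where `f p ≠ 0`, `a` is the logarithmic derivative of `f` along `v` at `p`. -/
def HasLogDerivAlongAt (f : E → ℝ) (v : E) (a : ℝ) (p : E) : Prop :=
  ∃ f' : E →L[ℝ] ℝ, HasFDerivAt f f' p ∧ f' v = a * f p

namespace HasLogDerivAlongAt

theorem fderiv_apply (hf : HasLogDerivAlongAt f v a p) : fderiv ℝ f p v = a * f p := by
  obtain ⟨f', hf', hv⟩ := hf
  rw [hf'.fderiv, hv]

theorem mul (hf : HasLogDerivAlongAt f v a p) (hg : HasLogDerivAlongAt g v b p) :
    HasLogDerivAlongAt (fun q ↦ f q * g q) v (a + b) p := by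
  obtain ⟨f', hf', hfv⟩ := hf
  obtain ⟨g', hg', hgv⟩ := hg
  refine ⟨_, hf'.mul hg', ?_⟩
  simp only [add_apply, smul_apply, smul_eq_mul, hfv, hgv]
  ring

theorem const_mul (c : ℝ) (hf : HasLogDerivAlongAt f v a p) :
    HasLogDerivAlongAt (fun q ↦ c * f q) v a p := by
  obtain ⟨f', hf', hfv⟩ := hf
  refine ⟨_, hf'.const_mul c, ?_⟩
  simp only [smul_apply, smul_eq_mul, hfv]
  ring

theorem inv (hf : HasLogDerivAlongAt f v a p) (hfp : f p ≠ 0) :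
    HasLogDerivAlongAt (fun q ↦ (f q)⁻¹) v (-a) p := by
  obtain ⟨f', hf', hfv⟩ := hf
  refine ⟨_, (hasDerivAt_inv hfp).comp_hasFDerivAt p hf', ?_⟩
  simp only [smul_apply, smul_eq_mul, hfv]
  field_simp

theorem div (hf : HasLogDerivAlongAt f v a p) (hg : HasLogDerivAlongAt g v b p) (hgp : g p ≠ 0) :
    HasLogDerivAlongAt (fun q ↦ f q / g q) v (a - b) p := by
  simpa only [div_eq_mul_inv, sub_eq_add_neg] using hf.mul (hg.inv hgp)

theorem abs (hf : HasLogDerivAlongAt f v a p) (hfp : f p ≠ 0) :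
    HasLogDerivAlongAt (fun q ↦ |f q|) v a p := by
  obtain ⟨f', hf', hfv⟩ := hf
  refine ⟨_, hf'.abs hfp, ?_⟩
  simp only [smul_apply, smul_eq_mul, hfv]
  rw [mul_left_comm, sign_mul_self]

theorem rpow_const (c : ℝ) (hf : HasLogDerivAlongAt f v a p) (hfp : f p ≠ 0) :
    HasLogDerivAlongAt (fun q ↦ f q ^ c) v (c * a) p := by
  obtain ⟨f', hf', hfv⟩ := hf
  refine ⟨_, hf'.rpow_const (Or.inl hfp), ?_⟩
  simp only [smul_apply, smul_eq_mul, hfv, rpow_sub_one hfp]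
  field_simp

end HasLogDerivAlongAt

end LogDerivAlong

theorem hasLogDerivAlongAt_linear (α β a : ℝ) {v p : ℝ × ℝ}
    (h : α * v.1 + β * v.2 = a * (α * p.1 + β * p.2)) :
    HasLogDerivAlongAt (fun q : ℝ × ℝ ↦ α * q.1 + β * q.2) v a p :=
  ⟨_, (hasFDerivAt_fst.const_mul α).add (hasFDerivAt_snd.const_mul β), by simpa using h⟩

theorem mul_pdX_add_mul_pdY (f : ℝ × ℝ → ℝ) (p : ℝ × ℝ) (a b : ℝ) :
    a * pdX f p + b * pdY f p = fderiv ℝ f p (a, b) := by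
  have hab : ((a, b) : ℝ × ℝ) = a • (1, 0) + b • (0, 1) := by simp
  rw [hab, map_add, map_smul, map_smul, pdX, pdY, smul_eq_mul, smul_eq_mul]

/-- For κ > 2, Δ = √(κ²−4), the function
Φ^O = ½(x²+y²+κxy)·|(κx+2y+Δx)/(κx+2y−Δx)|^{κ/Δ} is a first integral of the
over-damped oscillator ẋ = y, ẏ = −x−κy on {(κx+2y)² ≠ Δ²x²}. -/
theorem over_damped_first_integral
    (κ Δ : ℝ) (hκ : 2 < κ) (hΔ : Δ = Real.sqrt (κ ^ 2 - 4))
    (Φ : ℝ × ℝ → ℝ)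
    (hΦ : ∀ p : ℝ × ℝ, Φ p = (p.1 ^ 2 + p.2 ^ 2 + κ * p.1 * p.2) / 2 *
      |(κ * p.1 + 2 * p.2 + Δ * p.1) / (κ * p.1 + 2 * p.2 - Δ * p.1)| ^ (κ / Δ)) :
    ∀ x y : ℝ, (κ * x + 2 * y) ^ 2 ≠ Δ ^ 2 * x ^ 2 →
      y * pdX Φ (x, y) + (-x - κ * y) * pdY Φ (x, y) = 0 := by
  intro x y hxy
  have hΔsq : Δ ^ 2 = κ ^ 2 - 4 := by rw [hΔ, sq_sqrt (by nlinarith)]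
  have hΔ0 : Δ ≠ 0 := by rintro rfl; nlinarith
  set u : ℝ × ℝ → ℝ := fun q ↦ (κ + Δ) * q.1 + 2 * q.2
  set w : ℝ × ℝ → ℝ := fun q ↦ (κ - Δ) * q.1 + 2 * q.2
  have hΦuw : Φ = fun q ↦ 8⁻¹ * (u q * w q) * |u q / w q| ^ (κ / Δ) := by
    funext q
    rw [hΦ]
    congr 1
    · linear_combination (q.1 ^ 2 / 8) * hΔsq
    · congr 3 <;> ring
  have hu : u (x, y) ≠ 0 := fun h ↦ hxy (by linear_combination (w (x, y)) * h)
  have hw : w (x, y) ≠ 0 := fun h ↦ hxy (by linear_combination (u (x, y)) * h)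
  have hu' : HasLogDerivAlongAt u (y, -x - κ * y) ((Δ - κ) / 2) (x, y) :=
    hasLogDerivAlongAt_linear _ _ _ (by linear_combination (-x / 2) * hΔsq)
  have hw' : HasLogDerivAlongAt w (y, -x - κ * y) (-(κ + Δ) / 2) (x, y) :=
    hasLogDerivAlongAt_linear _ _ _ (by linear_combination (-x / 2) * hΔsq)
  have hΦ' := ((hu'.mul hw').const_mul 8⁻¹).mul
    (((hu'.div hw' hw).abs (div_ne_zero hu hw)).rpow_const (κ / Δ) (by positivity))
  rw [mul_pdX_add_mul_pdY, hΦuw, hΦ'.fderiv_apply]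
  field_simp
  ring
end

section
/- For 0 < κ < 2, the damped harmonic oscillator ẋ = y, ẏ = −x−κy is Hamiltonian with respect to (Φ^D, ρ^D): it holds that y = (ρ^D)^{-1}·∂Φ^D/∂y and −x−κy = −(ρ^D)^{-1}·∂Φ^D/∂x, on the open set where κx+2y ≠ 0. -/
open Real

/-!
Write `Φ^D = Q·e^θ` and `ρ^D = e^θ` with `Q = (x² + y² + κxy)/2` and
`θ = (2κ/Δ)·arctan(Δx/D)`, `D = κx + 2y`. Then `(ρ^D)⁻¹ dΦ^D = dQ + Q dθ`. Since `Δ² = 4 − κ²`,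
completing the square gives `(Δx)² + D² = 8Q`, so `d arctan(Δx/D) = 2Δ(y dx − x dy)/(8Q)` and
`Q dθ = (κ/2)(y dx − x dy)`. Adding `dQ = (x + κy/2) dx + (y + κx/2) dy` leaves
`(ρ^D)⁻¹ dΦ^D = (x + κy) dx + y dy`, which is the Hamiltonian relation.
-/

section
variable {E : Type*} [NormedAddCommGroup E] [NormedSpace ℝ E] {f g : E → ℝ} {f' g' : E →L[ℝ] ℝ}
  {p : E}

theorem HasFDerivAt.arctan_div (hf : HasFDerivAt f f' p) (hg : HasFDerivAt g g' p)
    (hg0 : g p ≠ 0) :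
    HasFDerivAt (fun q => Real.arctan (f q / g q))
      ((f p ^ 2 + g p ^ 2)⁻¹ • (g p • f' - f p • g')) p := by
  have hquot : HasFDerivAt (fun q => f q / g q) ((g p ^ 2)⁻¹ • (g p • f' - f p • g')) p := by
    refine (hf.mul ((hasDerivAt_inv hg0).comp_hasFDerivAt p hg)).congr_fderiv
      (ContinuousLinearMap.ext fun v => ?_)
    simp only [Function.comp_apply, add_apply, smul_apply, smul_eq_mul, sub_apply]
    field_simp
    ring
  refine hquot.arctan.congr_fderiv (ContinuousLinearMap.ext fun v => ?_)
  simp only [smul_apply, sub_apply, smul_eq_mul]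
  field_simp
  ring

theorem HasFDerivAt.mul_exp (hf : HasFDerivAt f f' p) (hg : HasFDerivAt g g' p) :
    HasFDerivAt (fun q => f q * Real.exp (g q)) (Real.exp (g p) • (f' + f p • g')) p := by
  refine (hf.mul hg.exp).congr_fderiv (ContinuousLinearMap.ext fun v => ?_)
  simp only [add_apply, smul_apply, smul_eq_mul]
  ring

end

namespace DampedOscillator

open ContinuousLinearMap

variable (κ Δ : ℝ)

noncomputable def energy (p : ℝ × ℝ) : ℝ := (p.1 ^ 2 + p.2 ^ 2 + κ * p.1 * p.2) / 2

noncomputable def phase (p : ℝ × ℝ) : ℝ := 2 * κ / Δ * arctan (Δ * p.1 / (κ * p.1 + 2 * p.2))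

variable {κ Δ}

theorem hasFDerivAt_energy (p : ℝ × ℝ) :
    HasFDerivAt (energy κ)
      ((p.1 + κ * p.2 / 2) • fst ℝ ℝ ℝ + (p.2 + κ * p.1 / 2) • snd ℝ ℝ ℝ) p := by
  have hx : HasFDerivAt (fun q : ℝ × ℝ => q.1) (fst ℝ ℝ ℝ) p := hasFDerivAt_fst
  have hy : HasFDerivAt (fun q : ℝ × ℝ => q.2) (snd ℝ ℝ ℝ) p := hasFDerivAt_snd
  have h := (((hx.pow 2).fun_add (hy.pow 2)).fun_add ((hx.const_mul κ).fun_mul hy)).mul_const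
    (2⁻¹ : ℝ)
  refine h.congr_fderiv (ContinuousLinearMap.ext fun v => ?_)
  simp only [add_apply, smul_apply, coe_fst', coe_snd', smul_eq_mul, nsmul_eq_mul]
  ring

theorem sq_add_sq_eq_eight_mul_energy (hΔ : Δ ^ 2 = 4 - κ ^ 2) (p : ℝ × ℝ) :
    (Δ * p.1) ^ 2 + (κ * p.1 + 2 * p.2) ^ 2 = 8 * energy κ p := by
  rw [energy, mul_pow, hΔ]
  ring

theorem hasFDerivAt_phase (hΔ : Δ ^ 2 = 4 - κ ^ 2) (hΔ0 : Δ ≠ 0) {p : ℝ × ℝ}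
    (hp : κ * p.1 + 2 * p.2 ≠ 0) :
    HasFDerivAt (phase κ Δ) ((κ / (2 * energy κ p)) • (p.2 • fst ℝ ℝ ℝ - p.1 • snd ℝ ℝ ℝ)) p := by
  have hx : HasFDerivAt (fun q : ℝ × ℝ => q.1) (fst ℝ ℝ ℝ) p := hasFDerivAt_fst
  have hy : HasFDerivAt (fun q : ℝ × ℝ => q.2) (snd ℝ ℝ ℝ) p := hasFDerivAt_snd
  have h := ((hx.const_mul Δ).arctan_div ((hx.const_mul κ).fun_add (hy.const_mul 2)) hp).const_mul
    (2 * κ / Δ)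
  refine h.congr_fderiv (ContinuousLinearMap.ext fun v => ?_)
  simp only [sq_add_sq_eq_eight_mul_energy hΔ, add_apply, sub_apply, smul_apply,
    coe_fst', coe_snd', smul_eq_mul]
  field_simp
  ring

theorem hasFDerivAt_energy_mul_exp_phase (hΔ : Δ ^ 2 = 4 - κ ^ 2) (hΔ0 : Δ ≠ 0) {p : ℝ × ℝ}
    (hp : κ * p.1 + 2 * p.2 ≠ 0) :
    HasFDerivAt (fun q => energy κ q * exp (phase κ Δ q))
      (exp (phase κ Δ p) • ((p.1 + κ * p.2) • fst ℝ ℝ ℝ + p.2 • snd ℝ ℝ ℝ)) p := by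
  have hE : 0 < energy κ p := by
    have h8 : 0 < 8 * energy κ p := by
      rw [← sq_add_sq_eq_eight_mul_energy hΔ]
      exact add_pos_of_nonneg_of_pos (sq_nonneg _) (sq_pos_of_ne_zero hp)
    linarith
  refine ((hasFDerivAt_energy p).mul_exp (hasFDerivAt_phase hΔ hΔ0 hp)).congr_fderiv
    (ContinuousLinearMap.ext fun v => ?_)
  simp only [add_apply, sub_apply, smul_apply, coe_fst', coe_snd', smul_eq_mul]
  field_simp
  ring

end DampedOscillator

/-- For 0 < κ < 2 the damped oscillator ẋ = y, ẏ = −x−κy is Hamiltonian with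
respect to (Φ^D, ρ^D) on {κx+2y ≠ 0}. -/
theorem damped_oscillator_hamiltonian
    (κ Δ : ℝ) (hκ : 0 < κ) (hκ2 : κ < 2) (hΔ : Δ = Real.sqrt (4 - κ ^ 2))
    (Φ ρ : ℝ × ℝ → ℝ)
    (hΦ : ∀ p : ℝ × ℝ, Φ p = (p.1 ^ 2 + p.2 ^ 2 + κ * p.1 * p.2) / 2 *
      Real.exp (2 * κ / Δ * Real.arctan (Δ * p.1 / (κ * p.1 + 2 * p.2))))
    (hρ : ∀ p : ℝ × ℝ, ρ p =
      Real.exp (2 * κ / Δ * Real.arctan (Δ * p.1 / (κ * p.1 + 2 * p.2)))) :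
    ∀ x y : ℝ, κ * x + 2 * y ≠ 0 →
      y = (ρ (x, y))⁻¹ * pdY Φ (x, y) ∧
      -x - κ * y = -((ρ (x, y))⁻¹ * pdX Φ (x, y)) := by
  intro x y hxy
  have hκ4 : 0 < 4 - κ ^ 2 := by nlinarith
  have hΔsq : Δ ^ 2 = 4 - κ ^ 2 := by rw [hΔ, sq_sqrt hκ4.le]
  have hΔ0 : Δ ≠ 0 := by rw [hΔ]; positivity
  have hΦ' : Φ = fun p => DampedOscillator.energy κ p * exp (DampedOscillator.phase κ Δ p) :=
    funext hΦ
  have hρ' : ρ (x, y) = exp (DampedOscillator.phase κ Δ (x, y)) := hρ (x, y)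
  have hgrad (v : ℝ × ℝ) :
      fderiv ℝ Φ (x, y) v = ρ (x, y) * ((x + κ * y) * v.1 + y * v.2) := by
    rw [hΦ', hρ', (DampedOscillator.hasFDerivAt_energy_mul_exp_phase hΔsq hΔ0 hxy).fderiv]
    rfl
  have hρ0 : ρ (x, y) ≠ 0 := hρ' ▸ exp_ne_zero _
  constructor
  · rw [pdY, hgrad, inv_mul_cancel_left₀ hρ0]
    ring
  · rw [pdX, hgrad, inv_mul_cancel_left₀ hρ0]
    ring
end

section
/- The critically damped harmonic oscillator ẋ = y, ẏ = −x−2y is Hamiltonian with respect to Φ^C(x,y) = ½(x+y)²exp(2x/(x+y)) and ρ^C(x,y) = exp(2x/(x+y)): namely y = (ρ^C)^{-1}∂Φ^C/∂y and −x−2y = −(ρ^C)^{-1}∂Φ^C/∂x hold on {(x,y) : x+y ≠ 0}. -/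
/-!
Write `s = x + y` and `ρ = exp (2x / s)`, so that `Φ = s² ρ / 2`. Along `x` the exponent `2x/s`
has derivative `2y/s²` and along `y` it has derivative `-2x/s²`; hence
`∂ₓΦ = ρ (s + y) = ρ (x + 2y)` and `∂ᵧΦ = ρ (s - x) = ρ y`.
-/

open Real

theorem pdX_eq_deriv {f : ℝ × ℝ → ℝ} {p : ℝ × ℝ} (hf : DifferentiableAt ℝ f p) :
    pdX f p = deriv (fun t => f (t, p.2)) p.1 :=
  (hf.hasFDerivAt.comp_hasDerivAt p.1
    ((hasDerivAt_id p.1).prodMk (hasDerivAt_const p.1 p.2))).deriv.symm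

theorem pdY_eq_deriv {f : ℝ × ℝ → ℝ} {p : ℝ × ℝ} (hf : DifferentiableAt ℝ f p) :
    pdY f p = deriv (fun t => f (p.1, t)) p.2 :=
  (hf.hasFDerivAt.comp_hasDerivAt p.2
    ((hasDerivAt_const p.2 p.1).prodMk (hasDerivAt_id p.2))).deriv.symm

noncomputable def criticalDensity (p : ℝ × ℝ) : ℝ := exp (2 * p.1 / (p.1 + p.2))

noncomputable def criticalPotential (p : ℝ × ℝ) : ℝ := (p.1 + p.2) ^ 2 / 2 * criticalDensity p

theorem differentiableAt_criticalPotential {p : ℝ × ℝ} (h : p.1 + p.2 ≠ 0) :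
    DifferentiableAt ℝ criticalPotential p := by
  unfold criticalPotential criticalDensity
  fun_prop (disch := exact h)

theorem hasDerivAt_criticalPotential_fst (y : ℝ) {x : ℝ} (h : x + y ≠ 0) :
    HasDerivAt (fun t => criticalPotential (t, y)) (criticalDensity (x, y) * (x + 2 * y)) x := by
  have hs : HasDerivAt (fun t => t + y) 1 x := (hasDerivAt_id' x).add_const y
  have hρ := (((hasDerivAt_id' x).const_mul 2).fun_div hs h).exp
  refine (((hs.fun_pow 2).div_const 2).fun_mul hρ).congr_deriv ?_
  unfold criticalDensity
  field_simp
  ring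

theorem hasDerivAt_criticalPotential_snd (x : ℝ) {y : ℝ} (h : x + y ≠ 0) :
    HasDerivAt (fun t => criticalPotential (x, t)) (criticalDensity (x, y) * y) y := by
  have hs : HasDerivAt (fun t => x + t) 1 y := (hasDerivAt_id' y).const_add x
  have hρ := ((hasDerivAt_const y (2 * x)).fun_div hs h).exp
  refine (((hs.fun_pow 2).div_const 2).fun_mul hρ).congr_deriv ?_
  unfold criticalDensity
  field_simp
  ring

/-- The critically damped oscillator ẋ = y, ẏ = −x−2y is Hamiltonian with
respect to Φ^C = ½(x+y)²exp(2x/(x+y)) and ρ^C = exp(2x/(x+y)) on {x+y ≠ 0}. -/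
theorem critically_damped_hamiltonian
    (Φ ρ : ℝ × ℝ → ℝ)
    (hΦ : ∀ p : ℝ × ℝ, Φ p = (p.1 + p.2) ^ 2 / 2 * Real.exp (2 * p.1 / (p.1 + p.2)))
    (hρ : ∀ p : ℝ × ℝ, ρ p = Real.exp (2 * p.1 / (p.1 + p.2))) :
    ∀ x y : ℝ, x + y ≠ 0 →
      y = (ρ (x, y))⁻¹ * pdY Φ (x, y) ∧
      -x - 2 * y = -((ρ (x, y))⁻¹ * pdX Φ (x, y)) := by
  intro x y h
  obtain rfl : Φ = criticalPotential := funext hΦ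
  obtain rfl : ρ = criticalDensity := funext hρ
  have hΦdiff := differentiableAt_criticalPotential (p := (x, y)) h
  have hρ0 : criticalDensity (x, y) ≠ 0 := exp_ne_zero _
  rw [pdX_eq_deriv hΦdiff, pdY_eq_deriv hΦdiff,
    (hasDerivAt_criticalPotential_fst y h).deriv, (hasDerivAt_criticalPotential_snd x h).deriv,
    inv_mul_cancel_left₀ hρ0, inv_mul_cancel_left₀ hρ0]
  exact ⟨rfl, by ring⟩
end

section
/- The density ρ^D(x,y) = exp((2κ/Δ)·arctan(Δx/(κx+2y))) defines an invariant measure for the damped harmonic oscillator: the divergence identity ∂_x(ρ^D·y) + ∂_y(ρ^D·(−x−κy)) = 0 holds on the open set κx+2y ≠ 0, for 0 < κ < 2 and Δ = (4−κ²)^{1/2}. -/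
/-!
Write `ρ = exp φ` and `v = (y, -x - κy)`. Then `div (ρ v) = ρ (Dφ · v + div v)`, and `div v = -κ`,
so it suffices that `φ` grows at rate `κ` along `v`. With `u = Δx / (κx + 2y)` one finds
`Du · v = 2Δ (x² + κxy + y²) / (κx + 2y)²`, while `Δ² = 4 - κ²` gives
`1 + u² = 4 (x² + κxy + y²) / (κx + 2y)²`; hence `D(arctan u) · v = Δ / 2` and `Dφ · v = κ`.
-/

open Real

theorem pdX_mul_add_pdY_mul {f a b : ℝ × ℝ → ℝ} {p : ℝ × ℝ} (hf : DifferentiableAt ℝ f p)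
    (ha : DifferentiableAt ℝ a p) (hb : DifferentiableAt ℝ b p) :
    pdX (fun q => f q * a q) p + pdY (fun q => f q * b q) p
      = fderiv ℝ f p (a p, b p) + f p * (pdX a p + pdY b p) := by
  have hv : (a p, b p) = a p • ((1 : ℝ), (0 : ℝ)) + b p • ((0 : ℝ), (1 : ℝ)) := by simp
  simp only [pdX, pdY, fderiv_fun_mul hf ha, fderiv_fun_mul hf hb, hv, map_add, map_smul,
    add_apply, smul_apply, smul_eq_mul]
  ring

theorem pdX_snd_add_pdY_neg_fst_sub_mul_snd (κ : ℝ) (p : ℝ × ℝ) :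
    pdX (fun q => q.2) p + pdY (fun q => -q.1 - κ * q.2) p = -κ := by
  have hlin : (fun q : ℝ × ℝ => -q.1 - κ * q.2) =
      ⇑(-ContinuousLinearMap.fst ℝ ℝ ℝ - κ • ContinuousLinearMap.snd ℝ ℝ ℝ) := by
    ext q; simp
  rw [pdX, pdY, hlin, ContinuousLinearMap.fderiv, fderiv_snd]
  simp

theorem hasDerivAt_affine_div_affine {a b c d : ℝ} (hc : c ≠ 0) :
    HasDerivAt (fun t => (a + t * b) / (c + t * d)) ((b * c - a * d) / c ^ 2) 0 := by
  have hnum : HasDerivAt (fun t => a + t * b) b 0 := by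
    simpa using ((hasDerivAt_id (0 : ℝ)).mul_const b).const_add a
  have hden : HasDerivAt (fun t => c + t * d) d 0 := by
    simpa using ((hasDerivAt_id (0 : ℝ)).mul_const d).const_add c
  simpa using hnum.fun_div hden (by simpa using hc)

noncomputable def dampedLogDensity (κ Δ : ℝ) (p : ℝ × ℝ) : ℝ :=
  2 * κ / Δ * arctan (Δ * p.1 / (κ * p.1 + 2 * p.2))

theorem differentiableAt_dampedLogDensity {κ Δ : ℝ} {p : ℝ × ℝ} (hp : κ * p.1 + 2 * p.2 ≠ 0) :
    DifferentiableAt ℝ (dampedLogDensity κ Δ) p := by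
  have hu : DifferentiableAt ℝ (fun q : ℝ × ℝ => Δ * q.1 / (κ * q.1 + 2 * q.2)) p := by
    fun_prop (disch := exact hp)
  exact hu.arctan.const_mul _

theorem hasLineDerivAt_dampedLogDensity {κ Δ x y : ℝ} (hΔ : Δ ≠ 0) (hΔsq : Δ ^ 2 = 4 - κ ^ 2)
    (hxy : κ * x + 2 * y ≠ 0) :
    HasLineDerivAt ℝ (dampedLogDensity κ Δ) κ (x, y) (y, -x - κ * y) := by
  have hline : (fun t : ℝ => dampedLogDensity κ Δ ((x, y) + t • (y, -x - κ * y))) = fun t =>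
      2 * κ / Δ * arctan ((Δ * x + t * (Δ * y)) / (κ * x + 2 * y + t * (-2 * x - κ * y))) := by
    funext t
    simp only [dampedLogDensity, Prod.fst_add, Prod.snd_add, Prod.smul_fst, Prod.smul_snd,
      smul_eq_mul]
    ring_nf
  have hQ : (κ * x + 2 * y) ^ 2 + Δ ^ 2 * x ^ 2 = 4 * (x ^ 2 + κ * x * y + y ^ 2) := by
    rw [hΔsq]; ring
  rw [HasLineDerivAt, hline]
  refine (((hasDerivAt_affine_div_affine hxy).arctan).const_mul (2 * κ / Δ)).congr_deriv ?_
  simp only [zero_mul, add_zero]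
  field_simp
  linear_combination (-κ) * hQ

/-- ρ^D = exp((2κ/Δ)arctan(Δx/(κx+2y))) is an invariant density for the damped
oscillator: ∂_x(ρ^D y) + ∂_y(ρ^D(−x−κy)) = 0 on {κx+2y ≠ 0}. -/
theorem damped_oscillator_invariant_measure
    (κ Δ : ℝ) (hκ : 0 < κ) (hκ2 : κ < 2) (hΔ : Δ = Real.sqrt (4 - κ ^ 2))
    (ρ : ℝ × ℝ → ℝ)
    (hρ : ∀ p : ℝ × ℝ, ρ p =
      Real.exp (2 * κ / Δ * Real.arctan (Δ * p.1 / (κ * p.1 + 2 * p.2)))) :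
    ∀ x y : ℝ, κ * x + 2 * y ≠ 0 →
      pdX (fun p => ρ p * p.2) (x, y)
        + pdY (fun p => ρ p * (-p.1 - κ * p.2)) (x, y) = 0 := by
  intro x y hxy
  have hρφ : ρ = fun p => exp (dampedLogDensity κ Δ p) := funext hρ
  subst hρφ
  have h4 : 0 < 4 - κ ^ 2 := by nlinarith
  have hΔpos : 0 < Δ := hΔ ▸ sqrt_pos.mpr h4
  have hΔsq : Δ ^ 2 = 4 - κ ^ 2 := hΔ ▸ sq_sqrt h4.le
  have hφ : DifferentiableAt ℝ (dampedLogDensity κ Δ) (x, y) :=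
    differentiableAt_dampedLogDensity hxy
  rw [pdX_mul_add_pdY_mul hφ.exp (by fun_prop) (by fun_prop), pdX_snd_add_pdY_neg_fst_sub_mul_snd,
    fderiv_exp hφ, smul_apply, ← hφ.lineDeriv_eq_fderiv,
    (hasLineDerivAt_dampedLogDensity hΔpos.ne' hΔsq hxy).lineDeriv]
  simp only [smul_eq_mul]
  ring
end
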